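/- Let n ≥ 1 and let T : ℝⁿ×ℝⁿ → ℝⁿ×ℝⁿ be a linear map that splits, with block matrices (α_j, β_j; γ_j, δ_j). Then for all a, b ∈ ℝⁿ, ‖F(γa + δb) − αa‖₂ ≤ 2‖T‖·‖(a,b)‖_{Z_2^n}, where γa, δb, αa denote coordinatewise products (γ_j a_j)_j, (δ_j b_j)_j, (α_j a_j)_j. -/
import Mathlib


open scoped BigOperators

/-- The Euclidean norm on `ℝⁿ`. -/
noncomputable def l2 {n : ℕ} (b : Fin n → ℝ) : ℝ := Real.sqrt (∑ j, b j ^ 2)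

/-- The Kalton–Peck map `F(b)_j = b_j log(|b_j|/‖b‖₂)`, with `F(b)_j = 0` when `b_j = 0`. -/
noncomputable def KPF {n : ℕ} (b : Fin n → ℝ) : Fin n → ℝ :=
  fun j => if b j = 0 then 0 else b j * Real.log (|b j| / l2 b)

/-- The Kalton–Peck quasi-norm `‖(a,b)‖ = ‖b‖₂ + ‖a - F(b)‖₂` on `ℝⁿ × ℝⁿ`. -/
noncomputable def znorm {n : ℕ} (x : (Fin n → ℝ) × (Fin n → ℝ)) : ℝ :=
  l2 x.2 + l2 (x.1 - KPF x.2)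

/-- Operator "norm" `sup_{x ≠ 0} N_W(T x) / N_V(x)` of a map `T` between spaces
equipped with (quasi-)norms `N_V`, `N_W`. -/
noncomputable def ratioSup {V W : Type*} [Zero V] (NV : V → ℝ) (NW : W → ℝ) (T : V → W) : ℝ :=
  ⨆ x : {x : V // x ≠ 0}, NW (T x.1) / NV x.1

section KPAux

lemma l2_eq_norm {n : ℕ} (b : Fin n → ℝ) :
    l2 b = ‖(WithLp.equiv 2 (Fin n → ℝ)).symm b‖ := by
  rw [EuclideanSpace.norm_eq]
  simp [l2, sq_abs]

lemma l2_nonneg {n : ℕ} (b : Fin n → ℝ) : 0 ≤ l2 b := Real.sqrt_nonneg _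

lemma l2_zero' {n : ℕ} : l2 (0 : Fin n → ℝ) = 0 := by simp [l2]

lemma l2_add_le {n : ℕ} (u v : Fin n → ℝ) : l2 (u + v) ≤ l2 u + l2 v := by
  rw [l2_eq_norm, l2_eq_norm, l2_eq_norm]
  exact norm_add_le _ _

lemma l2_neg {n : ℕ} (v : Fin n → ℝ) : l2 (-v) = l2 v := by
  rw [l2_eq_norm, l2_eq_norm]; exact norm_neg _

lemma l2_eq_zero {n : ℕ} {v : Fin n → ℝ} (h : l2 v = 0) : v = 0 := by
  rw [l2_eq_norm] at h
  exact (WithLp.equiv 2 (Fin n → ℝ)).symm.injective (norm_eq_zero.mp h)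

lemma l2_single {n : ℕ} (j : Fin n) (c : ℝ) : l2 (Pi.single j c) = |c| := by
  unfold l2
  rw [Finset.sum_eq_single j (fun i _ hi => by simp [Pi.single_apply, hi]) (by simp)]
  simp [Real.sqrt_sq_eq_abs]

lemma abs_le_l2 {n : ℕ} (b : Fin n → ℝ) (j : Fin n) : |b j| ≤ l2 b := by
  rw [← Real.sqrt_sq_eq_abs]
  exact Real.sqrt_le_sqrt (Finset.single_le_sum (fun i _ => sq_nonneg (b i)) (Finset.mem_univ j))

lemma KPF_single {n : ℕ} (j : Fin n) (c : ℝ) : KPF (Pi.single j c) = 0 := by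
  funext i
  by_cases hij : i = j
  · subst hij
    by_cases hc : c = 0
    · simp [KPF, hc]
    · simp [KPF, hc, l2_single, div_self (abs_ne_zero.mpr hc)]
  · simp [KPF, Pi.single_apply, hij]

lemma KPF_zero {n : ℕ} : KPF (0 : Fin n → ℝ) = 0 := by
  funext i; simp [KPF]

lemma abs_KPF_le {n : ℕ} (b : Fin n → ℝ) (j : Fin n) : |KPF b j| ≤ l2 b := by
  by_cases h : b j = 0
  · simp [KPF, h, l2_nonneg]
  · have hb : 0 < |b j| := abs_pos.mpr h
    have hl : 0 < l2 b := lt_of_lt_of_le hb (abs_le_l2 b j)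
    have hlog : Real.log (|b j| / l2 b) ≤ 0 :=
      Real.log_nonpos (by positivity) ((div_le_one hl).mpr (abs_le_l2 b j))
    have key : |b j| * Real.log (l2 b / |b j|) ≤ l2 b := by
      have := Real.log_le_sub_one_of_pos (show (0:ℝ) < l2 b / |b j| by positivity)
      calc |b j| * Real.log (l2 b / |b j|) ≤ |b j| * (l2 b / |b j| - 1) :=
            mul_le_mul_of_nonneg_left this (abs_nonneg _)
        _ = l2 b - |b j| := by field_simp
        _ ≤ l2 b := by linarith [abs_nonneg (b j)]
    calc |KPF b j| = |b j| * Real.log (l2 b / |b j|) := by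
          simp only [KPF, if_neg h, abs_mul]
          rw [abs_of_nonpos hlog, ← Real.log_inv, inv_div]
      _ ≤ l2 b := key

lemma l2_le_of_abs_le {n : ℕ} {u : Fin n → ℝ} {M : ℝ} (hM : 0 ≤ M)
    (h : ∀ j, |u j| ≤ M) : l2 u ≤ Real.sqrt n * M := by
  unfold l2
  calc Real.sqrt (∑ j, u j ^ 2) ≤ Real.sqrt (∑ _j : Fin n, M ^ 2) := by
        apply Real.sqrt_le_sqrt
        apply Finset.sum_le_sum
        intro i _
        rw [← sq_abs (u i)]
        exact pow_le_pow_left₀ (abs_nonneg _) (h i) 2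
    _ = Real.sqrt n * M := by
        rw [Finset.sum_const, Finset.card_univ, Fintype.card_fin, nsmul_eq_mul,
          Real.sqrt_mul (by positivity), Real.sqrt_sq hM]

lemma l2_KPF_le {n : ℕ} (b : Fin n → ℝ) : l2 (KPF b) ≤ Real.sqrt n * l2 b :=
  l2_le_of_abs_le (l2_nonneg b) (abs_KPF_le b)

lemma l2_mul_le {n : ℕ} (α a : Fin n → ℝ) : l2 (α * a) ≤ l2 α * l2 a := by
  unfold l2
  rw [← Real.sqrt_mul (by positivity)]
  apply Real.sqrt_le_sqrt
  rw [Finset.mul_sum]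
  apply Finset.sum_le_sum
  intro i _
  rw [Pi.mul_apply, mul_pow]
  apply mul_le_mul_of_nonneg_right _ (sq_nonneg (a i))
  exact Finset.single_le_sum (fun j _ => sq_nonneg (α j)) (Finset.mem_univ i)

lemma l2_mul_le_of_bound {n : ℕ} {β : Fin n → ℝ} {M : ℝ} (hM : 0 ≤ M)
    (h : ∀ j, |β j| ≤ M) (b : Fin n → ℝ) : l2 (β * b) ≤ M * l2 b := by
  unfold l2
  rw [← Real.sqrt_sq hM, ← Real.sqrt_mul (sq_nonneg M)]
  apply Real.sqrt_le_sqrt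
  rw [Finset.mul_sum]
  apply Finset.sum_le_sum
  intro i _
  rw [Pi.mul_apply, mul_pow]
  apply mul_le_mul_of_nonneg_right _ (sq_nonneg (b i))
  rw [← sq_abs (β i)]
  exact pow_le_pow_left₀ (abs_nonneg _) (h i) 2

lemma znorm_nonneg {n : ℕ} (x : (Fin n → ℝ) × (Fin n → ℝ)) : 0 ≤ znorm x :=
  add_nonneg (l2_nonneg _) (l2_nonneg _)

lemma znorm_zero' {n : ℕ} : znorm (0 : (Fin n → ℝ) × (Fin n → ℝ)) = 0 := by
  simp [znorm, KPF_zero, l2_zero']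

lemma znorm_pos {n : ℕ} {x : (Fin n → ℝ) × (Fin n → ℝ)} (hx : x ≠ 0) : 0 < znorm x := by
  rcases lt_or_eq_of_le (znorm_nonneg x) with h | h
  · exact h
  · exfalso
    apply hx
    have h2 : l2 x.2 = 0 := by
      have := l2_nonneg (x.1 - KPF x.2)
      have := l2_nonneg x.2
      unfold znorm at h
      linarith
    have hx2 : x.2 = 0 := l2_eq_zero h2
    have h1 : l2 (x.1 - KPF x.2) = 0 := by
      unfold znorm at h; linarith
    have hx1 : x.1 - KPF x.2 = 0 := l2_eq_zero h1
    rw [hx2, KPF_zero, sub_zero] at hx1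
    exact Prod.ext hx1 hx2

lemma smul_single {n : ℕ} (j : Fin n) (c d : ℝ) :
    c • (Pi.single j d : Fin n → ℝ) = Pi.single j (c * d) := by
  rw [← smul_eq_mul, Pi.single_smul]

lemma sum_smul_single {n : ℕ} (v : Fin n → ℝ) :
    ∑ x : Fin n, v x • (Pi.single x 1 : Fin n → ℝ) = v := by
  simp only [smul_single, mul_one, Finset.univ_sum_single]

lemma sum_single_mul {n : ℕ} (u v : Fin n → ℝ) :
    ∑ x : Fin n, Pi.single x (u x * v x) = v * u := by
  rw [← Finset.univ_sum_single (v * u)]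
  exact Finset.sum_congr rfl fun i _ => by rw [Pi.mul_apply, mul_comm]

lemma T_apply (n : ℕ)
    (T : ((Fin n → ℝ) × (Fin n → ℝ)) →ₗ[ℝ] ((Fin n → ℝ) × (Fin n → ℝ)))
    (α β γ δ : Fin n → ℝ)
    (hT : ∀ j : Fin n,
      T (Pi.single j 1, 0) = (Pi.single j (α j), Pi.single j (γ j)) ∧
      T (0, Pi.single j 1) = (Pi.single j (β j), Pi.single j (δ j)))
    (a b : Fin n → ℝ) :
    T (a, b) = (α * a + β * b, γ * a + δ * b) := by
  have hab : (a, b) = ∑ j : Fin n,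
      (a j • ((Pi.single j 1 : Fin n → ℝ), (0 : Fin n → ℝ))
        + b j • ((0 : Fin n → ℝ), (Pi.single j 1 : Fin n → ℝ))) := by
    apply Prod.ext <;>
      simp only [Prod.fst_sum, Prod.snd_sum, Prod.fst_add, Prod.snd_add,
        Prod.smul_fst, Prod.smul_snd, smul_zero, add_zero, zero_add] <;>
      rw [sum_smul_single]
  rw [hab, map_sum]
  simp only [map_add, map_smul, (hT _).1, (hT _).2]
  apply Prod.ext <;>
    simp only [Prod.fst_sum, Prod.snd_sum, Prod.fst_add, Prod.snd_add,
      Prod.smul_fst, Prod.smul_snd, Finset.sum_add_distrib, smul_single]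
  all_goals rw [sum_single_mul, sum_single_mul]

end KPAux

/-- For a splitting operator `T` on `Z_2^n` with block matrices `(α_j, β_j; γ_j, δ_j)`:
`‖F(γa + δb) − αa‖₂ ≤ 2‖T‖·‖(a,b)‖_{Z_2^n}`, with coordinatewise products. -/
theorem split_F_estimate (n : ℕ) (hn : 1 ≤ n)
    (T : ((Fin n → ℝ) × (Fin n → ℝ)) →ₗ[ℝ] ((Fin n → ℝ) × (Fin n → ℝ)))
    (α β γ δ : Fin n → ℝ)
    (hT : ∀ j : Fin n,
      T (Pi.single j 1, 0) = (Pi.single j (α j), Pi.single j (γ j)) ∧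
      T (0, Pi.single j 1) = (Pi.single j (β j), Pi.single j (δ j))) :
    ∀ a b : Fin n → ℝ,
      l2 (KPF (γ * a + δ * b) - α * a) ≤
        2 * ratioSup znorm znorm (fun x => T x) * znorm (a, b) := by
  intro a b
  set s := Real.sqrt n with hs
  have hs0 : (0:ℝ) ≤ s := Real.sqrt_nonneg _
  set K := l2 α + l2 β + l2 γ + l2 δ with hKdef
  have hK0 : 0 ≤ K := by
    have := l2_nonneg α; have := l2_nonneg β; have := l2_nonneg γ; have := l2_nonneg δ
    rw [hKdef]; linarith
  have hC : ∀ x : (Fin n → ℝ) × (Fin n → ℝ),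
      znorm (T x) ≤ ((1+s)*(1+s)*K) * znorm x := by
    intro x
    have hTx : T x = (α * x.1 + β * x.2, γ * x.1 + δ * x.2) := by
      rw [← T_apply n T α β γ δ hT x.1 x.2]
    set p := α * x.1 + β * x.2 with hp
    set q := γ * x.1 + δ * x.2 with hq
    have h1 : l2 p ≤ l2 α * l2 x.1 + l2 β * l2 x.2 :=
      le_trans (l2_add_le _ _) (add_le_add (l2_mul_le _ _) (l2_mul_le _ _))
    have h2 : l2 q ≤ l2 γ * l2 x.1 + l2 δ * l2 x.2 :=
      le_trans (l2_add_le _ _) (add_le_add (l2_mul_le _ _) (l2_mul_le _ _))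
    have h4 : l2 (p - KPF q) ≤ l2 p + s * l2 q := by
      calc l2 (p - KPF q) = l2 (p + -(KPF q)) := by rw [sub_eq_add_neg]
        _ ≤ l2 p + l2 (-(KPF q)) := l2_add_le _ _
        _ = l2 p + l2 (KPF q) := by rw [l2_neg]
        _ ≤ l2 p + s * l2 q := by linarith [l2_KPF_le q]
    have h3 : znorm (T x) ≤ (1+s) * (l2 p + l2 q) := by
      rw [hTx]
      show l2 q + l2 (p - KPF q) ≤ _
      nlinarith [mul_nonneg hs0 (l2_nonneg p)]
    have h5 : l2 p + l2 q ≤ K * (l2 x.1 + l2 x.2) := by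
      rw [hKdef]
      nlinarith [mul_nonneg (l2_nonneg α) (l2_nonneg x.2),
        mul_nonneg (l2_nonneg β) (l2_nonneg x.1),
        mul_nonneg (l2_nonneg γ) (l2_nonneg x.2),
        mul_nonneg (l2_nonneg δ) (l2_nonneg x.1)]
    have ha : l2 x.1 ≤ l2 (x.1 - KPF x.2) + s * l2 x.2 := by
      calc l2 x.1 = l2 ((x.1 - KPF x.2) + KPF x.2) := by rw [sub_add_cancel]
        _ ≤ l2 (x.1 - KPF x.2) + l2 (KPF x.2) := l2_add_le _ _
        _ ≤ _ := by linarith [l2_KPF_le x.2]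
    have h6 : l2 x.1 + l2 x.2 ≤ (1+s) * znorm x := by
      have hz : znorm x = l2 x.2 + l2 (x.1 - KPF x.2) := rfl
      nlinarith [mul_nonneg hs0 (l2_nonneg (x.1 - KPF x.2))]
    calc znorm (T x) ≤ (1+s) * (l2 p + l2 q) := h3
      _ ≤ (1+s) * (K * (l2 x.1 + l2 x.2)) :=
          mul_le_mul_of_nonneg_left h5 (by linarith)
      _ ≤ (1+s) * (K * ((1+s) * znorm x)) := by
          apply mul_le_mul_of_nonneg_left _ (by linarith : (0:ℝ) ≤ 1+s)
          exact mul_le_mul_of_nonneg_left h6 hK0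
      _ = ((1+s)*(1+s)*K) * znorm x := by ring
  have hbdd : BddAbove (Set.range fun x : {x : (Fin n → ℝ) × (Fin n → ℝ) // x ≠ 0} =>
      znorm (T x.1) / znorm x.1) := by
    refine ⟨(1+s)*(1+s)*K, ?_⟩
    rintro y ⟨x, rfl⟩
    exact (div_le_iff₀ (znorm_pos x.2)).mpr (hC x.1)
  set M := ratioSup znorm znorm (fun x => T x) with hMdef
  have hkey : ∀ x, znorm (T x) ≤ M * znorm x := by
    intro x
    by_cases hx : x = 0
    · subst hx
      rw [map_zero, znorm_zero', mul_zero]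
    · have h := le_ciSup hbdd (⟨x, hx⟩ : {x : (Fin n → ℝ) × (Fin n → ℝ) // x ≠ 0})
      exact (div_le_iff₀ (znorm_pos hx)).mp h
  have hM0 : 0 ≤ M := by
    have hx0 : ((0 : Fin n → ℝ), (Pi.single (⟨0, hn⟩ : Fin n) 1 : Fin n → ℝ)) ≠ 0 := by
      intro h
      have := congrFun (congrArg Prod.snd h) ⟨0, hn⟩
      simp at this
    have h := le_ciSup hbdd (⟨_, hx0⟩ : {x : (Fin n → ℝ) × (Fin n → ℝ) // x ≠ 0})
    exact le_trans (div_nonneg (znorm_nonneg _) (znorm_nonneg _)) h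
  have hβ : ∀ j, |β j| ≤ M := by
    intro j
    have h := hkey (0, Pi.single j 1)
    rw [(hT j).2] at h
    have e1 : znorm ((0 : Fin n → ℝ), Pi.single j (1:ℝ)) = 1 := by
      simp [znorm, KPF_single, l2_single, l2_zero']
    have e2 : znorm (Pi.single j (β j), Pi.single j (δ j)) = |δ j| + |β j| := by
      simp [znorm, KPF_single, l2_single]
    rw [e1, e2, mul_one] at h
    linarith [abs_nonneg (δ j)]
  have h1 := hkey (a, b)
  rw [T_apply n T α β γ δ hT a b] at h1
  have hz1 : znorm (α*a+β*b, γ*a+δ*b)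
      = l2 (γ*a+δ*b) + l2 ((α*a+β*b) - KPF (γ*a+δ*b)) := rfl
  rw [hz1] at h1
  have h2 : l2 ((α*a+β*b) - KPF (γ*a+δ*b)) ≤ M * znorm (a,b) - l2 (γ*a+δ*b) := by
    linarith
  have hb2 : l2 b ≤ znorm (a, b) := by
    have hz2 : znorm (a,b) = l2 b + l2 (a - KPF b) := rfl
    linarith [l2_nonneg (a - KPF b)]
  have hid : KPF (γ*a+δ*b) - α*a
      = (-((α*a+β*b) - KPF (γ*a+δ*b))) + β*b := by abel
  calc l2 (KPF (γ*a+δ*b) - α*a)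
      = l2 ((-((α*a+β*b) - KPF (γ*a+δ*b))) + β*b) := by rw [hid]
    _ ≤ l2 (-((α*a+β*b) - KPF (γ*a+δ*b))) + l2 (β*b) := l2_add_le _ _
    _ = l2 ((α*a+β*b) - KPF (γ*a+δ*b)) + l2 (β*b) := by rw [l2_neg]
    _ ≤ (M * znorm (a,b) - l2 (γ*a+δ*b)) + M * l2 b :=
        add_le_add h2 (l2_mul_le_of_bound hM0 hβ b)
    _ ≤ 2 * M * znorm (a, b) := by
        nlinarith [l2_nonneg (γ*a+δ*b), mul_le_mul_of_nonneg_left hb2 hM0]
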